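/- Let F be a field and let R_1 ≤ AGL_{n_1}(F) and R_2 ≤ AGL_{n_2}(F) be regular subgroups with R_1 ∩ Tr = {I_{n_1+1}} and R_2 ∩ Tr = {I_{n_2+1}}. Then the set R of block matrices (1, v_1, v_2; 0, A_1, 0; 0, 0, A_2) of size n_1 + n_2 + 1, where (1, v_1; 0, A_1) ranges over R_1 and (1, v_2; 0, A_2) ranges over R_2, is a regular subgroup of AGL_{n_1+n_2}(F) with R ∩ Tr = {I_{n_1+n_2+1}}. -/

import Mathlib

/-!
An affine matrix `(1 v; 0 A)` is determined by its translation part `v` and its linear part `A`,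
and `(1 v; 0 A) (1 w; 0 B) = (1, w + v B; 0, A B)`. The block matrix `prodMat n₁ n₂ M₁ M₂` is
the affine matrix with translation part `(v₁, v₂)` and linear part `diag(A₁, A₂)`, so it defines
a homomorphism `AGL_{n₁}(F) × AGL_{n₂}(F) → AGL_{n₁+n₂}(F)`, and `R` is the image of `R₁ × R₂`.
The translation parts of `R` are exactly the concatenations `(v₁, v₂)`, whence regularity, and
the linear part `diag(A₁, A₂)` is trivial only when `A₁` and `A₂` are.
-/

open Matrix

/-- `M` lies in the affine group `AGL_n(F) ≤ GL_{n+1}(F)`: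
it has block form `(1 v; 0 A)`, i.e. entry `(0,0)` equals `1` and the rest of
the first column is `0`. -/
def IsAffine {F : Type*} [Field F] {n : ℕ} (M : GL (Fin (n + 1)) F) : Prop :=
  (M : Matrix (Fin (n + 1)) (Fin (n + 1)) F) 0 0 = 1 ∧
    ∀ i : Fin (n + 1), i ≠ 0 → (M : Matrix (Fin (n + 1)) (Fin (n + 1)) F) i 0 = 0

/-- `M` is a translation: it is affine with linear part `A = I_n`,
i.e. all rows other than the first agree with the identity matrix. -/
def IsTranslation {F : Type*} [Field F] {n : ℕ} (M : GL (Fin (n + 1)) F) : Prop :=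
  IsAffine M ∧ ∀ i j : Fin (n + 1), i ≠ 0 →
    (M : Matrix (Fin (n + 1)) (Fin (n + 1)) F) i j = if i = j then 1 else 0

/-- `R` is a regular subgroup of `AGL_n(F)`: all its elements are affine and for
every `v ∈ F^n` there is exactly one element of `R` with first row `(1, v)`. -/
def IsRegularAffine {F : Type*} [Field F] {n : ℕ} (R : Subgroup (GL (Fin (n + 1)) F)) : Prop :=
  (∀ M ∈ R, IsAffine M) ∧
    ∀ v : Fin n → F, ∃! M : GL (Fin (n + 1)) F, M ∈ R ∧
      ∀ j : Fin n, (M : Matrix (Fin (n + 1)) (Fin (n + 1)) F) 0 j.succ = v j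

/-- `M ∈ GL_{n+1}(F)` is unipotent: `(M - I)^{n+1} = 0`. -/
def IsUnipotent {F : Type*} [Field F] {n : ℕ} (M : GL (Fin (n + 1)) F) : Prop :=
  ((M : Matrix (Fin (n + 1)) (Fin (n + 1)) F) - 1) ^ (n + 1) = 0

/-- Given `M₁ = (1 v₁; 0 A₁)` of size `n₁+1` and `M₂ = (1 v₂; 0 A₂)` of size
`n₂+1`, the block matrix `(1, v₁, v₂; 0, A₁, 0; 0, 0, A₂)` of size `n₁+n₂+1`. -/
def prodMat {F : Type*} [Field F] (n₁ n₂ : ℕ)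
    (M₁ : Matrix (Fin (n₁ + 1)) (Fin (n₁ + 1)) F)
    (M₂ : Matrix (Fin (n₂ + 1)) (Fin (n₂ + 1)) F) :
    Matrix (Fin (n₁ + n₂ + 1)) (Fin (n₁ + n₂ + 1)) F :=
  Matrix.of fun i j =>
    if hi0 : (i : ℕ) = 0 then
      if hj0 : (j : ℕ) = 0 then 1
      else if hjm : (j : ℕ) ≤ n₁ then M₁ 0 ⟨(j : ℕ), by omega⟩
      else M₂ 0 ⟨(j : ℕ) - n₁, by have := j.2; omega⟩
    else if him : (i : ℕ) ≤ n₁ then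
      if hjm : 1 ≤ (j : ℕ) ∧ (j : ℕ) ≤ n₁ then
        M₁ ⟨(i : ℕ), by omega⟩ ⟨(j : ℕ), by omega⟩
      else 0
    else
      if hjm : n₁ < (j : ℕ) then
        M₂ ⟨(i : ℕ) - n₁, by have := i.2; omega⟩ ⟨(j : ℕ) - n₁, by have := j.2; omega⟩
      else 0

namespace Matrix

variable {F : Type*} [Field F] {n : ℕ}

def translationPart (P : Matrix (Fin (n + 1)) (Fin (n + 1)) F) : Fin n → F :=
  fun j => P 0 j.succ

def linearPart (P : Matrix (Fin (n + 1)) (Fin (n + 1)) F) : Matrix (Fin n) (Fin n) F :=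
  P.submatrix Fin.succ Fin.succ

theorem translationPart_one : translationPart (1 : Matrix (Fin (n + 1)) (Fin (n + 1)) F) = 0 := by
  ext j
  simp [translationPart, (Fin.succ_ne_zero j).symm]

theorem linearPart_one : linearPart (1 : Matrix (Fin (n + 1)) (Fin (n + 1)) F) = 1 :=
  submatrix_one _ (Fin.succ_injective n)

section AffineMatrix

variable {P Q : Matrix (Fin (n + 1)) (Fin (n + 1)) F}

theorem apply_zero_zero_of_mulVec_single (hP : P *ᵥ Pi.single 0 1 = Pi.single 0 1) :
    P 0 0 = 1 := by
  simpa using congrFun hP 0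

theorem apply_succ_zero_of_mulVec_single (hP : P *ᵥ Pi.single 0 1 = Pi.single 0 1)
    (i : Fin n) : P i.succ 0 = 0 := by
  simpa using congrFun hP i.succ

theorem translationPart_mul (hP : P *ᵥ Pi.single 0 1 = Pi.single 0 1) :
    translationPart (P * Q) = translationPart Q + translationPart P ᵥ* linearPart Q := by
  ext j
  simp [translationPart, linearPart, mul_apply, vecMul, dotProduct, Fin.sum_univ_succ,
    apply_zero_zero_of_mulVec_single hP]

theorem linearPart_mul (hP : P *ᵥ Pi.single 0 1 = Pi.single 0 1) :
    linearPart (P * Q) = linearPart P * linearPart Q := by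
  ext i j
  simp [linearPart, mul_apply, Fin.sum_univ_succ, apply_succ_zero_of_mulVec_single hP]

theorem eq_of_translationPart_eq_of_linearPart_eq (hP : P *ᵥ Pi.single 0 1 = Pi.single 0 1)
    (hQ : Q *ᵥ Pi.single 0 1 = Pi.single 0 1)
    (ht : translationPart P = translationPart Q) (hl : linearPart P = linearPart Q) : P = Q := by
  ext i j
  cases i using Fin.cases <;> cases j using Fin.cases
  · rw [apply_zero_zero_of_mulVec_single hP, apply_zero_zero_of_mulVec_single hQ]
  · exact congrFun ht _
  · rw [apply_succ_zero_of_mulVec_single hP, apply_succ_zero_of_mulVec_single hQ]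
  · exact congrFun₂ hl _ _

end AffineMatrix

end Matrix

section ProdMat

variable {F : Type*} [Field F] {n₁ n₂ : ℕ}
  (P₁ : Matrix (Fin (n₁ + 1)) (Fin (n₁ + 1)) F) (P₂ : Matrix (Fin (n₂ + 1)) (Fin (n₂ + 1)) F)

theorem prodMat_mulVec_single : prodMat n₁ n₂ P₁ P₂ *ᵥ Pi.single 0 1 = Pi.single 0 1 := by
  ext i
  rw [mulVec_single_one, col_apply]
  by_cases hi : i = 0
  · subst hi
    simp [prodMat]
  · simp [prodMat, hi]

theorem translationPart_prodMat :
    translationPart (prodMat n₁ n₂ P₁ P₂) ∘ finSumFinEquiv =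
      Sum.elim (translationPart P₁) (translationPart P₂) := by
  ext (a | b) <;> simp [translationPart, prodMat, add_assoc, ← Fin.succ_mk]

theorem linearPart_prodMat :
    (linearPart (prodMat n₁ n₂ P₁ P₂)).submatrix finSumFinEquiv finSumFinEquiv =
      fromBlocks (linearPart P₁) 0 0 (linearPart P₂) := by
  ext (a | b) (c | d) <;> simp [linearPart, prodMat, add_assoc, ← Fin.succ_mk]

theorem linearPart_prodMat_eq_one_iff :
    linearPart (prodMat n₁ n₂ P₁ P₂) = 1 ↔ linearPart P₁ = 1 ∧ linearPart P₂ = 1 := by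
  rw [← (reindex finSumFinEquiv.symm finSumFinEquiv.symm).injective.eq_iff, reindex_apply,
    Equiv.symm_symm, linearPart_prodMat, reindex_apply, submatrix_one_equiv, ← fromBlocks_one,
    fromBlocks_inj]
  simp

theorem eq_prodMat_iff {Q : Matrix (Fin (n₁ + n₂ + 1)) (Fin (n₁ + n₂ + 1)) F}
    (hQ : Q *ᵥ Pi.single 0 1 = Pi.single 0 1) :
    Q = prodMat n₁ n₂ P₁ P₂ ↔
      translationPart Q ∘ finSumFinEquiv = Sum.elim (translationPart P₁) (translationPart P₂) ∧
        (linearPart Q).submatrix finSumFinEquiv finSumFinEquiv =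
          fromBlocks (linearPart P₁) 0 0 (linearPart P₂) := by
  refine ⟨?_, fun ⟨ht, hl⟩ => ?_⟩
  · rintro rfl
    exact ⟨translationPart_prodMat P₁ P₂, linearPart_prodMat P₁ P₂⟩
  refine eq_of_translationPart_eq_of_linearPart_eq hQ (prodMat_mulVec_single P₁ P₂) ?_ ?_
  · exact finSumFinEquiv.surjective.injective_comp_right
      (ht.trans (translationPart_prodMat P₁ P₂).symm)
  · apply (reindex finSumFinEquiv.symm finSumFinEquiv.symm).injective
    simpa only [reindex_apply, Equiv.symm_symm, linearPart_prodMat] using hl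

theorem prodMat_one : prodMat n₁ n₂ (1 : Matrix (Fin (n₁ + 1)) (Fin (n₁ + 1)) F) 1 = 1 := by
  refine ((eq_prodMat_iff _ _ (one_mulVec _)).mpr ?_).symm
  simp [translationPart_one, linearPart_one]

variable {P₁ P₂}

theorem prodMat_mul (hP₁ : P₁ *ᵥ Pi.single 0 1 = Pi.single 0 1)
    (hP₂ : P₂ *ᵥ Pi.single 0 1 = Pi.single 0 1)
    (Q₁ : Matrix (Fin (n₁ + 1)) (Fin (n₁ + 1)) F) (Q₂ : Matrix (Fin (n₂ + 1)) (Fin (n₂ + 1)) F) :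
    prodMat n₁ n₂ P₁ P₂ * prodMat n₁ n₂ Q₁ Q₂ = prodMat n₁ n₂ (P₁ * Q₁) (P₂ * Q₂) := by
  have hP := prodMat_mulVec_single P₁ P₂
  have hPQ : (prodMat n₁ n₂ P₁ P₂ * prodMat n₁ n₂ Q₁ Q₂) *ᵥ Pi.single 0 1 = Pi.single 0 1 := by
    rw [← mulVec_mulVec, prodMat_mulVec_single, hP]
  refine (eq_prodMat_iff _ _ hPQ).mpr ⟨?_, ?_⟩
  · rw [translationPart_mul hP, translationPart_mul hP₁, translationPart_mul hP₂]
    calc _ = translationPart (prodMat n₁ n₂ Q₁ Q₂) ∘ finSumFinEquiv +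
            (translationPart (prodMat n₁ n₂ P₁ P₂) ∘ finSumFinEquiv) ᵥ*
              (linearPart (prodMat n₁ n₂ Q₁ Q₂)).submatrix finSumFinEquiv finSumFinEquiv := by
          rw [submatrix_vecMul_equiv, Function.comp_assoc, Equiv.self_comp_symm,
            Function.comp_id]
          rfl
      _ = _ := by
          rw [translationPart_prodMat, translationPart_prodMat, linearPart_prodMat,
            vecMul_fromBlocks]
          simp [Sum.elim_add_add]
  · rw [linearPart_mul hP, ← submatrix_mul_equiv _ _ _ finSumFinEquiv, linearPart_prodMat,
      linearPart_prodMat, fromBlocks_multiply, linearPart_mul hP₁, linearPart_mul hP₂]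
    simp

end ProdMat

-- The first column of `M` is `M *ᵥ e₀`, so `AGL_n(F)` is the stabiliser of `e₀`.
def affineSubgroup (F : Type*) [Field F] (n : ℕ) : Subgroup (GL (Fin (n + 1)) F) where
  carrier := {M | (M : Matrix (Fin (n + 1)) (Fin (n + 1)) F) *ᵥ Pi.single 0 1 = Pi.single 0 1}
  one_mem' := one_mulVec _
  mul_mem' {M N} hM hN := by
    rw [Set.mem_ofPred_eq] at hM hN ⊢
    rw [Units.val_mul, ← mulVec_mulVec, hN, hM]
  inv_mem' {M} hM := by
    rw [Set.mem_ofPred_eq] at hM ⊢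
    conv_lhs => rw [← hM, mulVec_mulVec, ← Units.val_mul, inv_mul_cancel, Units.val_one,
      one_mulVec]

section AffineSubgroup

variable {F : Type*} [Field F] {n n₁ n₂ : ℕ}

theorem mem_affineSubgroup_iff {M : GL (Fin (n + 1)) F} :
    M ∈ affineSubgroup F n ↔
      (M : Matrix (Fin (n + 1)) (Fin (n + 1)) F) *ᵥ Pi.single 0 1 = Pi.single 0 1 :=
  Iff.rfl

theorem isAffine_iff_mem_affineSubgroup (M : GL (Fin (n + 1)) F) :
    IsAffine M ↔ M ∈ affineSubgroup F n := by
  simp only [IsAffine, mem_affineSubgroup_iff, funext_iff, mulVec_single_one, col_apply,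
    Pi.single_apply]
  refine ⟨fun ⟨h0, h⟩ i => ?_, fun h => ⟨by simpa using h 0, fun i hi => by simpa [hi] using h i⟩⟩
  split_ifs with hi
  · exact hi ▸ h0
  · exact h i hi

theorem isRegularAffine_iff (R : Subgroup (GL (Fin (n + 1)) F)) :
    IsRegularAffine R ↔ R ≤ affineSubgroup F n ∧
      ∀ v : Fin n → F, ∃! M : GL (Fin (n + 1)) F,
        M ∈ R ∧ translationPart (M : Matrix (Fin (n + 1)) (Fin (n + 1)) F) = v := by
  simp only [IsRegularAffine, SetLike.le_def, isAffine_iff_mem_affineSubgroup, funext_iff,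
    translationPart]

theorem isTranslation_iff (M : GL (Fin (n + 1)) F) :
    IsTranslation M ↔
      M ∈ affineSubgroup F n ∧ linearPart (M : Matrix (Fin (n + 1)) (Fin (n + 1)) F) = 1 := by
  rw [IsTranslation, isAffine_iff_mem_affineSubgroup]
  refine and_congr_right fun hM => ⟨fun h => ?_, fun h i j hi => ?_⟩
  · ext i j
    simpa [linearPart, one_apply] using h i.succ j.succ (Fin.succ_ne_zero i)
  · obtain ⟨i, rfl⟩ := Fin.exists_succ_eq.mpr hi
    cases j using Fin.cases
    · simp [apply_succ_zero_of_mulVec_single hM]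
    · simpa [linearPart, one_apply] using congrFun₂ h i _

variable (F n₁ n₂) in
def affineProd : affineSubgroup F n₁ × affineSubgroup F n₂ →* GL (Fin (n₁ + n₂ + 1)) F :=
  MonoidHom.toHomUnits
    { toFun M := prodMat n₁ n₂ (M.1 : GL (Fin (n₁ + 1)) F) (M.2 : GL (Fin (n₂ + 1)) F)
      map_one' := prodMat_one
      map_mul' M N := by simpa using (prodMat_mul M.1.2 M.2.2 _ _).symm }

theorem coe_affineProd_apply (M : affineSubgroup F n₁ × affineSubgroup F n₂) :
    (affineProd F n₁ n₂ M : Matrix (Fin (n₁ + n₂ + 1)) (Fin (n₁ + n₂ + 1)) F) =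
      prodMat n₁ n₂ (M.1 : GL (Fin (n₁ + 1)) F) (M.2 : GL (Fin (n₂ + 1)) F) :=
  rfl

section ProdSubgroup

variable {R₁ : Subgroup (GL (Fin (n₁ + 1)) F)} {R₂ : Subgroup (GL (Fin (n₂ + 1)) F)}
  (h₁ : R₁ ≤ affineSubgroup F n₁) (h₂ : R₂ ≤ affineSubgroup F n₂)

def prodSubgroup : Subgroup (GL (Fin (n₁ + n₂ + 1)) F) :=
  ((affineProd F n₁ n₂).comp ((Subgroup.inclusion h₁).prodMap (Subgroup.inclusion h₂))).range

variable {h₁ h₂} in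
theorem mem_prodSubgroup {M : GL (Fin (n₁ + n₂ + 1)) F} :
    M ∈ prodSubgroup h₁ h₂ ↔ ∃ M₁ ∈ R₁, ∃ M₂ ∈ R₂,
      (M : Matrix (Fin (n₁ + n₂ + 1)) (Fin (n₁ + n₂ + 1)) F) =
        prodMat n₁ n₂ (M₁ : Matrix (Fin (n₁ + 1)) (Fin (n₁ + 1)) F)
          (M₂ : Matrix (Fin (n₂ + 1)) (Fin (n₂ + 1)) F) := by
  simp [prodSubgroup, Units.ext_iff, coe_affineProd_apply, eq_comm]

theorem isRegularAffine_prodSubgroup (hreg₁ : IsRegularAffine R₁) (hreg₂ : IsRegularAffine R₂) :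
    IsRegularAffine (prodSubgroup h₁ h₂) := by
  rw [isRegularAffine_iff] at hreg₁ hreg₂ ⊢
  refine ⟨fun M hM => ?_, fun v => ?_⟩
  · obtain ⟨M₁, -, M₂, -, hM⟩ := mem_prodSubgroup.mp hM
    rw [mem_affineSubgroup_iff, hM]
    exact prodMat_mulVec_single _ _
  obtain ⟨M₁, ⟨hM₁, hv₁⟩, huniq₁⟩ := hreg₁.2 (v ∘ finSumFinEquiv ∘ Sum.inl)
  obtain ⟨M₂, ⟨hM₂, hv₂⟩, huniq₂⟩ := hreg₂.2 (v ∘ finSumFinEquiv ∘ Sum.inr)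
  refine ⟨affineProd F n₁ n₂ (⟨M₁, h₁ hM₁⟩, ⟨M₂, h₂ hM₂⟩),
    ⟨mem_prodSubgroup.mpr ⟨M₁, hM₁, M₂, hM₂, rfl⟩, ?_⟩, ?_⟩
  · apply finSumFinEquiv.surjective.injective_comp_right
    simp only [coe_affineProd_apply, translationPart_prodMat, hv₁, hv₂]
    exact Sum.elim_comp_inl_inr (v ∘ finSumFinEquiv)
  · rintro M ⟨hM, hMv⟩
    obtain ⟨N₁, hN₁, N₂, hN₂, hN⟩ := mem_prodSubgroup.mp hM
    have hparts := translationPart_prodMat (N₁ : Matrix (Fin (n₁ + 1)) (Fin (n₁ + 1)) F)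
      (N₂ : Matrix (Fin (n₂ + 1)) (Fin (n₂ + 1)) F)
    rw [← hN, hMv] at hparts
    obtain rfl := huniq₁ N₁ ⟨hN₁, by rw [← Function.comp_assoc, hparts, Sum.elim_comp_inl]⟩
    obtain rfl := huniq₂ N₂ ⟨hN₂, by rw [← Function.comp_assoc, hparts, Sum.elim_comp_inr]⟩
    exact Units.ext hN

theorem eq_one_of_mem_prodSubgroup_of_isTranslation
    (htr₁ : ∀ M ∈ R₁, IsTranslation M → M = 1) (htr₂ : ∀ M ∈ R₂, IsTranslation M → M = 1)
    {M : GL (Fin (n₁ + n₂ + 1)) F} (hM : M ∈ prodSubgroup h₁ h₂) (hMt : IsTranslation M) :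
    M = 1 := by
  obtain ⟨M₁, hM₁, M₂, hM₂, hM⟩ := mem_prodSubgroup.mp hM
  rw [isTranslation_iff, hM, linearPart_prodMat_eq_one_iff] at hMt
  obtain rfl := htr₁ M₁ hM₁ ((isTranslation_iff M₁).mpr ⟨h₁ hM₁, hMt.2.1⟩)
  obtain rfl := htr₂ M₂ hM₂ ((isTranslation_iff M₂).mpr ⟨h₂ hM₂, hMt.2.2⟩)
  exact Units.ext (hM.trans prodMat_one)

end ProdSubgroup

end AffineSubgroup

theorem prod_regular_no_translations {F : Type*} [Field F] {n₁ n₂ : ℕ}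
    (R₁ : Subgroup (GL (Fin (n₁ + 1)) F)) (R₂ : Subgroup (GL (Fin (n₂ + 1)) F))
    (hreg₁ : IsRegularAffine R₁) (hreg₂ : IsRegularAffine R₂)
    (htr₁ : ∀ M ∈ R₁, IsTranslation M → M = 1)
    (htr₂ : ∀ M ∈ R₂, IsTranslation M → M = 1) :
    ∃ R : Subgroup (GL (Fin (n₁ + n₂ + 1)) F),
      (∀ M : GL (Fin (n₁ + n₂ + 1)) F,
          M ∈ R ↔ ∃ M₁ ∈ R₁, ∃ M₂ ∈ R₂,
            (M : Matrix (Fin (n₁ + n₂ + 1)) (Fin (n₁ + n₂ + 1)) F) =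
              prodMat n₁ n₂ (M₁ : Matrix (Fin (n₁ + 1)) (Fin (n₁ + 1)) F)
                (M₂ : Matrix (Fin (n₂ + 1)) (Fin (n₂ + 1)) F)) ∧
      IsRegularAffine (n := n₁ + n₂) R ∧
      ∀ M ∈ R, IsTranslation (n := n₁ + n₂) M → M = 1 := by
  have h₁ := ((isRegularAffine_iff R₁).mp hreg₁).1
  have h₂ := ((isRegularAffine_iff R₂).mp hreg₂).1
  exact ⟨prodSubgroup h₁ h₂, fun _ => mem_prodSubgroup,
    isRegularAffine_prodSubgroup h₁ h₂ hreg₁ hreg₂,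
    fun _ => eq_one_of_mem_prodSubgroup_of_isTranslation h₁ h₂ htr₁ htr₂⟩
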